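/- Let C = L_1;L_2 be a two-layer comparator network on n channels containing channels a < b < c < d such that (a,b) and (c,d) are comparators of L_1, channels b and d are unused in L_2, each of a and c is the larger endpoint of some comparator of L_2, and the comparator of L_2 containing c is (j,c) for some channel j < c. Let C' be obtained from C by adding the comparator (b,d) to L_2. Then the vector x ∈ {0,1}^n with x_j = x_b = 0 and all other entries equal to 1 satisfies x ∈ outputs(C') and x ∉ outputs(C); in particular outputs(C') ⊄ outputs(C). (This is case (iv) in the proof of Theorem 2 of the paper.) -/
import Mathlib


/-- A layer: a set of comparators `(i,j)` with `i < j`, each channel in at most one comparator. -/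
def IsLayer {n : ℕ} (L : Finset (Fin n × Fin n)) : Prop :=
  (∀ c ∈ L, c.1 < c.2) ∧
  (∀ c ∈ L, ∀ c' ∈ L, c ≠ c' →
    c.1 ≠ c'.1 ∧ c.1 ≠ c'.2 ∧ c.2 ≠ c'.1 ∧ c.2 ≠ c'.2)

/-- Apply one layer to a binary vector: the first channel of a comparator receives the
minimum (`&&`), the second the maximum (`||`). -/
noncomputable def applyLayer {n : ℕ} (L : Finset (Fin n × Fin n)) (x : Fin n → Bool) :
    Fin n → Bool := fun k =>
  if h : ∃ j, (k, j) ∈ L then x k && x h.choose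
  else if h' : ∃ i, (i, k) ∈ L then x h'.choose || x k
  else x k

/-- Propagate a binary input through the layers of a network (a list of layers). -/
noncomputable def applyNet {n : ℕ} (N : List (Finset (Fin n × Fin n))) (x : Fin n → Bool) :
    Fin n → Bool :=
  N.foldl (fun v L => applyLayer L v) x

/-- The set of binary outputs of a network. -/
noncomputable def outputs {n : ℕ} (N : List (Finset (Fin n × Fin n))) : Set (Fin n → Bool) :=
  Set.range (applyNet N)

/-- A network sorts all binary inputs. -/
def Sorts {n : ℕ} (N : List (Finset (Fin n × Fin n))) : Prop :=
  ∀ x : Fin n → Bool, Monotone (applyNet N x)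

/-- The first layer `F_n`: comparators `(2k-1, 2k)` (0-indexed: `(2k, 2k+1)`). -/
def Fn (n : ℕ) : Finset (Fin n × Fin n) :=
  Finset.univ.filter (fun c => c.1.val % 2 = 0 ∧ c.2.val = c.1.val + 1)

/-- Channel `i` is used by some comparator of `L`. -/
def UsedIn {n : ℕ} (L : Finset (Fin n × Fin n)) (i : Fin n) : Prop :=
  ∃ c ∈ L, c.1 = i ∨ c.2 = i

/-- A network is redundant if removing some comparator leaves the set of outputs unchanged. -/
def Redundant {n : ℕ} (N : List (Finset (Fin n × Fin n))) : Prop :=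
  ∃ k, ∃ hk : k < N.length, ∃ c ∈ N.get ⟨k, hk⟩,
    outputs (N.set k ((N.get ⟨k, hk⟩).erase c)) = outputs N

/-- A two-layer network `L₁;L₂` is saturated if it is non-redundant and adding any
comparator to its last layer yields a network whose outputs are not a subset of the
original outputs. -/
def Saturated2 {n : ℕ} (L1 L2 : Finset (Fin n × Fin n)) : Prop :=
  ¬ Redundant [L1, L2] ∧
  ∀ c : Fin n × Fin n, c ∉ L2 → IsLayer (insert c L2) →
    ¬ (outputs [L1, insert c L2] ⊆ outputs [L1, L2])

lemma layer_fst_unique {n : ℕ} {L : Finset (Fin n × Fin n)} (hL : IsLayer L)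
    {k q q' : Fin n} (h : (k, q) ∈ L) (h' : (k, q') ∈ L) : q = q' := by
  by_contra hne
  have hne2 : ((k, q) : Fin n × Fin n) ≠ (k, q') := fun h => hne (congrArg Prod.snd h)
  exact (hL.2 _ h _ h' hne2).1 rfl

lemma layer_snd_unique {n : ℕ} {L : Finset (Fin n × Fin n)} (hL : IsLayer L)
    {k p p' : Fin n} (h : (p, k) ∈ L) (h' : (p', k) ∈ L) : p = p' := by
  by_contra hne
  have hne2 : ((p, k) : Fin n × Fin n) ≠ (p', k) := fun h => hne (congrArg Prod.fst h)
  exact (hL.2 _ h _ h' hne2).2.2.2 rfl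

lemma layer_no_fst_of_snd {n : ℕ} {L : Finset (Fin n × Fin n)} (hL : IsLayer L)
    {p k : Fin n} (h : (p, k) ∈ L) : ¬ ∃ q, (k, q) ∈ L := by
  rintro ⟨q, hq⟩
  have hne : ((k, q) : Fin n × Fin n) ≠ (p, k) := by
    intro he
    have h1 := congrArg Prod.fst he
    have hlt := hL.1 _ h
    simp at h1
    exact absurd h1 (ne_of_gt hlt)
  exact (hL.2 _ hq _ h hne).2.1 rfl

lemma layer_no_snd_of_fst {n : ℕ} {L : Finset (Fin n × Fin n)} (hL : IsLayer L)
    {k q : Fin n} (h : (k, q) ∈ L) : ¬ ∃ p, (p, k) ∈ L := by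
  rintro ⟨p, hp⟩
  exact layer_no_fst_of_snd hL hp ⟨q, h⟩

lemma applyLayer_fst {n : ℕ} {L : Finset (Fin n × Fin n)} (hL : IsLayer L)
    {k q : Fin n} (h : (k, q) ∈ L) (x : Fin n → Bool) :
    applyLayer L x k = (x k && x q) := by
  have hex : ∃ q', (k, q') ∈ L := ⟨q, h⟩
  unfold applyLayer
  rw [dif_pos hex]
  exact congrArg (fun t => x k && x t) (layer_fst_unique hL hex.choose_spec h)

lemma applyLayer_snd {n : ℕ} {L : Finset (Fin n × Fin n)} (hL : IsLayer L)
    {p k : Fin n} (h : (p, k) ∈ L) (x : Fin n → Bool) :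
    applyLayer L x k = (x p || x k) := by
  have hex : ∃ p', (p', k) ∈ L := ⟨p, h⟩
  unfold applyLayer
  rw [dif_neg (layer_no_fst_of_snd hL h), dif_pos hex]
  exact congrArg (fun t => x t || x k) (layer_snd_unique hL hex.choose_spec h)

lemma applyLayer_none {n : ℕ} {L : Finset (Fin n × Fin n)}
    {k : Fin n} (h1 : ¬ ∃ q, (k, q) ∈ L) (h2 : ¬ ∃ p, (p, k) ∈ L) (x : Fin n → Bool) :
    applyLayer L x k = x k := by
  unfold applyLayer
  rw [dif_neg h1, dif_neg h2]


/-- case (iv) in the proof of Theorem 2 of the paper.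
Channels `a < b < c < d` with `(a,b),(c,d)` in the first layer, `b,d` unused in the
second layer, `a` and `c` both larger endpoints of second-layer comparators, the
comparator at `c` being `(j,c)` with `j < c`.  Adding the comparator `(b,d)` to the
second layer produces the output vector that is `0` exactly at positions `j` and `b`,
which is not an output of the original network. -/
theorem statement5 (n : ℕ) (L1 L2 : Finset (Fin n × Fin n))
    (h1 : IsLayer L1) (h2 : IsLayer L2)
    (a b c d : Fin n) (hab : a < b) (hbc : b < c) (hcd : c < d)
    (hab1 : (a, b) ∈ L1) (hcd1 : (c, d) ∈ L1)
    (hb2 : ¬ UsedIn L2 b) (hd2 : ¬ UsedIn L2 d)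
    (ha2 : ∃ u, (u, a) ∈ L2)
    (j : Fin n) (hjc : (j, c) ∈ L2) (hj : j < c) :
    (fun k => if k = j ∨ k = b then false else true) ∈ outputs [L1, insert (b, d) L2] ∧
    (fun k => if k = j ∨ k = b then false else true) ∉ outputs [L1, L2] ∧
    ¬ (outputs [L1, insert (b, d) L2] ⊆ outputs [L1, L2]) := by
  obtain ⟨u, hu⟩ := ha2
  have hbd : b < d := hbc.trans hcd
  have hua : u < a := h2.1 _ hu
  have hne_ab : a ≠ b := ne_of_lt hab
  have hne_bc : b ≠ c := ne_of_lt hbc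
  have hne_cd : c ≠ d := ne_of_lt hcd
  have hne_bd : b ≠ d := ne_of_lt hbd
  have hne_ac : a ≠ c := ne_of_lt (hab.trans hbc)
  have hne_ad : a ≠ d := ne_of_lt ((hab.trans hbc).trans hcd)
  have hne_jc : j ≠ c := ne_of_lt hj
  have hne_jd : j ≠ d := ne_of_lt (hj.trans hcd)
  have hne_jb : j ≠ b := fun h => hb2 ⟨(j, c), hjc, Or.inl h⟩
  have huac : ((u, a) : Fin n × Fin n) ≠ (j, c) := fun h => hne_ac (congrArg Prod.snd h)
  have hprop := h2.2 _ hu _ hjc huac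
  have hne_uj : u ≠ j := hprop.1
  have hne_aj : a ≠ j := hprop.2.2.1
  have hne_ub : u ≠ b := fun h => hb2 ⟨(u, a), hu, Or.inl h⟩
  set x : Fin n → Bool := fun k => if k = j ∨ k = b then false else true with hx
  have hbd2 : ((b, d) : Fin n × Fin n) ∈ insert (b, d) L2 := Finset.mem_insert_self _ _
  have hjc' : ((j, c) : Fin n × Fin n) ∈ insert (b, d) L2 := Finset.mem_insert_of_mem hjc
  have hL2' : IsLayer (insert (b, d) L2) := by
    constructor
    · intro e he
      rcases Finset.mem_insert.1 he with he | he
      · rw [he]; exact hbd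
      · exact h2.1 _ he
    · intro e he e' he' hne
      rcases Finset.mem_insert.1 he with rfl | he <;>
        rcases Finset.mem_insert.1 he' with rfl | he'
      · exact absurd rfl hne
      · refine ⟨fun h => hb2 ⟨e', he', Or.inl h.symm⟩, fun h => hb2 ⟨e', he', Or.inr h.symm⟩,
          fun h => hd2 ⟨e', he', Or.inl h.symm⟩, fun h => hd2 ⟨e', he', Or.inr h.symm⟩⟩
      · refine ⟨fun h => hb2 ⟨e, he, Or.inl h⟩, fun h => hd2 ⟨e, he, Or.inl h⟩,
          fun h => hb2 ⟨e, he, Or.inr h⟩, fun h => hd2 ⟨e, he, Or.inr h⟩⟩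
      · exact h2.2 _ he _ he' hne
  have part1 : x ∈ outputs [L1, insert (b, d) L2] := by
    refine ⟨fun k => if k = c ∨ k = d then false else true, ?_⟩
    set y : Fin n → Bool := fun k => if k = c ∨ k = d then false else true with hy
    set v := applyLayer L1 y with hvdef
    have hv : ∀ k, v k = if k = c ∨ k = d then false else true := by
      intro k
      by_cases hkq : ∃ q, (k, q) ∈ L1
      · obtain ⟨q, hq⟩ := hkq
        rw [hvdef, applyLayer_fst h1 hq]
        by_cases hkc : k = c
        · subst hkc
          have hqd : q = d := layer_fst_unique h1 hq hcd1
          subst hqd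
          simp [hy]
        · have hkd : k ≠ d := fun h => layer_no_fst_of_snd h1 hcd1 ⟨q, h ▸ hq⟩
          have hne : ((k, q) : Fin n × Fin n) ≠ (c, d) := fun h => hkc (congrArg Prod.fst h)
          have hp := h1.2 _ hq _ hcd1 hne
          simp [hy, hkc, hkd, hp.2.2.1, hp.2.2.2]
      · by_cases hpk : ∃ p, (p, k) ∈ L1
        · obtain ⟨p, hp⟩ := hpk
          rw [hvdef, applyLayer_snd h1 hp]
          by_cases hkd : k = d
          · subst hkd
            have hpc : p = c := layer_snd_unique h1 hp hcd1
            subst hpc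
            simp [hy]
          · have hkc : k ≠ c := fun h => layer_no_snd_of_fst h1 hcd1 ⟨p, h ▸ hp⟩
            simp [hy, hkc, hkd]
        · rw [hvdef, applyLayer_none hkq hpk]
    have hnet : applyNet [L1, insert (b, d) L2] y = applyLayer (insert (b, d) L2) v := rfl
    rw [hnet]
    funext k
    by_cases hkb : k = b
    · rw [hkb, applyLayer_fst hL2' hbd2]
      simp [hv b, hv d, hx, hne_bc, hne_bd]
    · by_cases hkd : k = d
      · rw [hkd, applyLayer_snd hL2' hbd2]
        simp [hv b, hv d, hx, hne_bc, hne_bd, Ne.symm hne_jd, Ne.symm hne_bd]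
      · by_cases hkj : k = j
        · rw [hkj, applyLayer_fst hL2' hjc']
          simp [hv j, hv c, hx]
        · by_cases hkc : k = c
          · rw [hkc, applyLayer_snd hL2' hjc']
            simp [hv j, hv k, hx, hne_jc, hne_jd, Ne.symm hne_jc, Ne.symm hne_bc]
          · by_cases hq : ∃ q, (k, q) ∈ insert (b, d) L2
            · obtain ⟨q, hq'⟩ := hq
              rw [applyLayer_fst hL2' hq']
              have hq2 : (k, q) ∈ L2 := by
                rcases Finset.mem_insert.1 hq' with h | h
                · exact absurd (congrArg Prod.fst h) hkb
                · exact h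
              have hqd : q ≠ d := fun h => hd2 ⟨(k, q), hq2, Or.inr h⟩
              have hqc : q ≠ c := by
                have hne : ((k, q) : Fin n × Fin n) ≠ (j, c) :=
                  fun h => hkj (congrArg Prod.fst h)
                exact (h2.2 _ hq2 _ hjc hne).2.2.2
              simp [hv k, hv q, hx, hkc, hkd, hkj, hkb, hqc, hqd]
            · by_cases hp : ∃ p, (p, k) ∈ insert (b, d) L2
              · obtain ⟨p, hp'⟩ := hp
                rw [applyLayer_snd hL2' hp']
                simp [hv k, hx, hkc, hkd, hkj, hkb]
              · rw [applyLayer_none hq hp]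
                simp [hv k, hx, hkc, hkd, hkj, hkb]
  have part2 : x ∉ outputs [L1, L2] := by
    rintro ⟨y, hy⟩
    have hy2 : applyLayer L2 (applyLayer L1 y) = x := hy
    set v := applyLayer L1 y with hvdef
    have hvb : v b = (y a || y b) := applyLayer_snd h1 hab1 y
    have hva : v a = (y a && y b) := applyLayer_fst h1 hab1 y
    have hnb1 : ¬ ∃ q, (b, q) ∈ L2 := fun ⟨q, hq⟩ => hb2 ⟨(b, q), hq, Or.inl rfl⟩
    have hnb2 : ¬ ∃ p, (p, b) ∈ L2 := fun ⟨p, hp⟩ => hb2 ⟨(p, b), hp, Or.inr rfl⟩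
    have hcf : ∀ k, applyLayer L2 v k = x k := fun k => congrFun hy2 k
    have hb' := hcf b
    rw [applyLayer_none hnb1 hnb2, hvb] at hb'
    have hxbf : x b = false := by simp [hx]
    rw [hxbf] at hb'
    obtain ⟨hya, hyb⟩ := Bool.or_eq_false_iff.1 hb'
    have hvaf : v a = false := by rw [hva, hya, hyb]; rfl
    have ha' := hcf a
    rw [applyLayer_snd h2 hu, hvaf, Bool.or_false] at ha'
    have hxat : x a = true := by simp [hx, hne_aj, hne_ab]
    rw [hxat] at ha'
    have hu' := hcf u
    rw [applyLayer_fst h2 hu, ha', hvaf, Bool.true_and] at hu'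
    have hxut : x u = true := by simp [hx, hne_uj, hne_ub]
    rw [hxut] at hu'
    exact Bool.false_ne_true hu'
  exact ⟨part1, part2, fun hsub => part2 (hsub part1)⟩
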